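/- Let Z be a special symbol of defect 1 and size (m+1,m) and Z' a special symbol of defect 0 and size (m',m') with m' = m or m' = m+1, and suppose D_{Z,Z'} ≠ ∅. Then: (i) there is a union Ψ'_0 of pairwise disjoint consecutive pairs in Z'_I such that D_Z = {Λ_{Ψ'} : Ψ' ≤ Ψ'_0}; (ii) there is a union Ψ_0 of pairwise disjoint consecutive pairs in Z_I such that D_{Z'} = {Λ_Ψ : Ψ ≤ Ψ_0}. -/

import Mathlib

open scoped symmDiff

/-- A symbol: a pair of finsets of naturals (its two rows, each read in
strictly decreasing order). -/
abbrev Symb :=  Finset ℕ × Finset ℕ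

/-- The strictly decreasing enumeration of a finset of naturals. -/
def rowList (s : Finset ℕ) : List ℕ := (s.sort (· ≤ ·)).reverse

/-- The `i`-th entry (0-based) of the strictly decreasing enumeration of `s`. -/
def ent (s : Finset ℕ) (i : ℕ) : Option ℕ := (rowList s)[i]?

/-- Impose a relation on two optional entries whenever both exist. -/
def oRel (r : ℕ → ℕ → Prop) : Option ℕ → Option ℕ → Prop
  | some x, some y => r x y
  | _, _ => True

/-- `Z` is a special symbol of defect 1 and size `(m+1, m)`. -/
def IsSpecial1 (Z : Symb) (m : ℕ) : Prop :=
  Z.1.card = m + 1 ∧ Z.2.card = m ∧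
  (∀ i, oRel (· ≥ ·) (ent Z.1 i) (ent Z.2 i)) ∧
  (∀ i, oRel (· ≥ ·) (ent Z.2 i) (ent Z.1 (i + 1)))

/-- `Z'` is a special symbol of defect 0 and size `(m', m')`. -/
def IsSpecial0 (Z : Symb) (m' : ℕ) : Prop :=
  Z.1.card = m' ∧ Z.2.card = m' ∧
  (∀ i, oRel (· ≥ ·) (ent Z.1 i) (ent Z.2 i)) ∧
  (∀ i, oRel (· ≥ ·) (ent Z.2 i) (ent Z.1 (i + 1)))

/-- `Z_I`: the entries of `Z` lying in exactly one row (row remembered). -/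
def ZI (Z : Symb) : Symb := (Z.1 \ Z.2, Z.2 \ Z.1)

/-- `M` is a subset of `Z_I`. -/
def SubZI (M Z : Symb) : Prop := M.1 ⊆ Z.1 \ Z.2 ∧ M.2 ⊆ Z.2 \ Z.1

/-- `Z` is regular: no degenerate entries. -/
def Regular (Z : Symb) : Prop := Disjoint Z.1 Z.2

/-- `Λ_M`: exchange the rows of the entries of `M`. -/
def lam (Z M : Symb) : Symb := ((Z.1 \ M.1) ∪ M.2, (Z.2 \ M.2) ∪ M.1)

/-- `S̄_Z = {Λ_M : M ⊆ Z_I}`. -/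
def Sbar (Z : Symb) : Set Symb := {Λ | ∃ M, SubZI M Z ∧ Λ = lam Z M}

/-- Size and inequality conditions of `B̄⁺_{Z,Z'}` in the case `m' = m`. -/
def Bm (Λ Λ' : Symb) : Prop :=
  Λ'.1.card = Λ.2.card ∧ Λ'.2.card + 1 = Λ.1.card ∧
  (∀ i, oRel (· > ·) (ent Λ.1 i) (ent Λ'.2 i)) ∧
  (∀ i, oRel (· ≥ ·) (ent Λ'.2 i) (ent Λ.1 (i + 1))) ∧
  (∀ i, oRel (· > ·) (ent Λ.2 i) (ent Λ'.1 (i + 1))) ∧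
  (∀ i, oRel (· ≥ ·) (ent Λ'.1 i) (ent Λ.2 i))

/-- Size and inequality conditions of `B̄⁺_{Z,Z'}` in the case `m' = m + 1`. -/
def Bm1 (Λ Λ' : Symb) : Prop :=
  Λ'.1.card = Λ.2.card + 1 ∧ Λ'.2.card = Λ.1.card ∧
  (∀ i, oRel (· ≥ ·) (ent Λ.1 i) (ent Λ'.2 i)) ∧
  (∀ i, oRel (· > ·) (ent Λ'.2 i) (ent Λ.1 (i + 1))) ∧
  (∀ i, oRel (· ≥ ·) (ent Λ.2 i) (ent Λ'.1 (i + 1))) ∧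
  (∀ i, oRel (· > ·) (ent Λ'.1 i) (ent Λ.2 i))

/-- The relation `B̄⁺_{Z,Z'}`. -/
def BbarPlus (Z Z' : Symb) (m m' : ℕ) (Λ Λ' : Symb) : Prop :=
  Λ ∈ Sbar Z ∧ Λ' ∈ Sbar Z' ∧
  ((m' = m ∧ Bm Λ Λ') ∨ (m' = m + 1 ∧ Bm1 Λ Λ'))

/-- The relation `D_{Z,Z'}`. -/
def DRel (Z Z' : Symb) (m m' : ℕ) (A A' : Symb) : Prop :=
  BbarPlus Z Z' m m' A A' ∧
  A.1.card = m + 1 ∧ A.2.card = m ∧ A'.1.card = m' ∧ A'.2.card = m'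

/-- `{c, d}` is a consecutive pair in `Z_I`. -/
def ConsecPair (Z : Symb) (c d : ℕ) : Prop :=
  c ∈ Z.1 \ Z.2 ∧ d ∈ Z.2 \ Z.1 ∧
  ∀ x ∈ (Z.1 \ Z.2) ∪ (Z.2 \ Z.1), ¬(min c d < x ∧ x < max c d)

/-!
A row `s` is encoded by its counting function `t ↦ #{y ∈ s | t ≤ y}` (`countGe`). The
interlacing conditions defining special symbols and `B̄⁺` become inequalities between counting
functions (`IsSpecialCount`, `Linked`). Exchanging entries of `Z_I` does not change the total
count `totalGe` of a symbol, and for special symbols the total count determines both rows, so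
any element of `D_{Z,Z'}` forces `Z` and `Z'` themselves to be linked.

Fix the symbol `Y` on the other side and call `y + b`, for `y` an entry of `Y`, a cut point.
Then `Λ_M ∈ S̄_X` is linked to `Y` iff `M` has as many first-row as second-row entries above
every cut point, i.e. iff the entries of `M` pair up inside the cells between consecutive cut
points. The total count of `X` drops by two between two entries of the same row of `X_I` but
can drop by only one inside a cell, so each cell holds at most one entry of each row of `X_I`:
the pairs of entries sharing a cell are disjoint consecutive pairs, and `Ψ_0` is their union.
-/

def countGe (s : Finset ℕ) (t : ℕ) : ℕ := (s.filter (t ≤ ·)).card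

section Counting

variable {s A B : Finset ℕ}

lemma countGe_le_countGe {t t' : ℕ} (h : ∀ y ∈ s, t ≤ y → t' ≤ y) :
    countGe s t ≤ countGe s t' :=
  Finset.card_le_card (Finset.monotone_filter_right s h)

lemma countGe_antitone (s : Finset ℕ) : Antitone (countGe s) :=
  fun _ _ h => countGe_le_countGe fun _ _ hy => h.trans hy

lemma countGe_zero (s : Finset ℕ) : countGe s 0 = s.card := by
  simp [countGe]

lemma countGe_le_card (s : Finset ℕ) (t : ℕ) : countGe s t ≤ s.card :=
  Finset.card_filter_le _ _

lemma card_filter_Ico_add_countGe {p q : ℕ} (h : p ≤ q) :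
    (s.filter fun y => p ≤ y ∧ y < q).card + countGe s q = countGe s p := by
  rw [countGe, countGe, ← Finset.card_filter_add_card_filter_not (s := s.filter (p ≤ ·)) (· < q),
    Finset.filter_filter, Finset.filter_filter]
  congr 2
  exact Finset.filter_congr fun y _ => by omega

lemma countGe_eq_countGe_succ_add (s : Finset ℕ) (x : ℕ) :
    countGe s x = countGe s (x + 1) + if x ∈ s then 1 else 0 := by
  rw [← card_filter_Ico_add_countGe (Nat.le_succ x), add_comm]
  congr
  rw [Finset.filter_congr (q := (· = x)) fun y _ => by omega, Finset.filter_eq']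
  split_ifs <;> rfl

lemma exists_mem_of_countGe_lt {t t' : ℕ} (h : countGe s t' < countGe s t) :
    ∃ u ∈ s, t ≤ u ∧ u < t' := by
  by_contra! hc
  exact h.not_ge (countGe_le_countGe hc)

lemma countGe_union (h : Disjoint A B) (t : ℕ) :
    countGe (A ∪ B) t = countGe A t + countGe B t := by
  rw [countGe, Finset.filter_union, Finset.card_union_of_disjoint
    (Finset.disjoint_filter_filter h)]
  rfl

lemma countGe_sdiff_add (h : B ⊆ A) (t : ℕ) :
    countGe (A \ B) t + countGe B t = countGe A t := by
  rw [← countGe_union Finset.sdiff_disjoint, Finset.sdiff_union_of_subset h]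

end Counting

section Enumeration

lemma length_rowList (s : Finset ℕ) : (rowList s).length = s.card := by
  simp [rowList]

lemma countGe_eq_length_filter (s : Finset ℕ) (t : ℕ) :
    countGe s t = ((rowList s).filter (t ≤ ·)).length := by
  have hnodup : (rowList s).Nodup := List.nodup_reverse.2 (Finset.sort_nodup s _)
  rw [← List.toFinset_card_of_nodup (hnodup.filter _), List.toFinset_filter, countGe]
  simp [rowList]

lemma lt_length_filter_le_iff {l : List ℕ} (hl : l.Pairwise (· > ·)) {i x : ℕ}
    (hx : l[i]? = some x) (t : ℕ) : i < (l.filter (t ≤ ·)).length ↔ t ≤ x := by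
  induction l generalizing i with
  | nil => simp at hx
  | cons a l ih =>
    have hlt : ∀ y ∈ l, y < a := fun y hy => List.rel_of_pairwise_cons hl hy
    by_cases hta : t ≤ a
    · cases i with
      | zero => simp_all
      | succ i => simpa [List.filter_cons, hta] using ih hl.of_cons hx
    · have hnil : l.filter (t ≤ ·) = [] :=
        List.filter_eq_nil_iff.2 fun y hy => by have := hlt y hy; simp; omega
      have hxa : x ≤ a := by
        cases i with
        | zero => simp_all
        | succ i => exact (hlt x (List.mem_of_getElem? hx)).le
      simp [hta, hnil]
      omega

lemma lt_countGe_iff {s : Finset ℕ} {i x : ℕ} (hx : ent s i = some x) (t : ℕ) :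
    i < countGe s t ↔ t ≤ x := by
  have hsorted : (rowList s).Pairwise (· > ·) := by
    rw [rowList, List.pairwise_reverse]
    exact List.sortedLT_iff_pairwise.1 (Finset.sortedLT_sort s)
  rw [countGe_eq_length_filter]
  exact lt_length_filter_le_iff hsorted hx t

lemma exists_ent_eq_some {s : Finset ℕ} {i : ℕ} (h : i < s.card) : ∃ x, ent s i = some x :=
  ⟨_, List.getElem?_eq_getElem (by rwa [length_rowList])⟩

lemma oRel_of_some {r : ℕ → ℕ → Prop} {u v : Option ℕ}
    (h : ∀ x y, u = some x → v = some y → r x y) : oRel r u v := by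
  cases u <;> cases v <;> first | trivial | exact h _ _ rfl rfl

variable {r : ℕ → ℕ → Prop} {k : ℕ} {A B : Finset ℕ}

lemma forall_oRel_ent_iff (hr : ∀ x y, r x y ↔ y + k ≤ x) (hBA : B.card ≤ A.card) :
    (∀ i, oRel r (ent A i) (ent B i)) ↔ ∀ t, countGe B t ≤ countGe A (t + k) := by
  constructor
  · intro h t
    by_contra! hlt
    set i := countGe A (t + k)
    have hiB : i < B.card := hlt.trans_le (countGe_le_card B t)
    obtain ⟨x, hx⟩ := exists_ent_eq_some (hiB.trans_le hBA)
    obtain ⟨y, hy⟩ := exists_ent_eq_some hiB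
    have hrxy : r x y := by simpa [hx, hy, oRel] using h i
    have hty := (lt_countGe_iff hy t).1 hlt
    exact lt_irrefl i ((lt_countGe_iff hx _).2 (by have := (hr x y).1 hrxy; omega))
  · refine fun h i => oRel_of_some fun x y hx hy => (hr x y).2 ?_
    exact (lt_countGe_iff hx _).1 (((lt_countGe_iff hy y).2 le_rfl).trans_le (h y))

lemma forall_oRel_ent_succ_iff (hr : ∀ x y, r x y ↔ y + k ≤ x) (hAB : A.card ≤ B.card + 1) :
    (∀ i, oRel r (ent B i) (ent A (i + 1))) ↔ ∀ t, countGe A t ≤ countGe B (t + k) + 1 := by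
  constructor
  · intro h t
    by_contra! hlt
    set i := countGe B (t + k)
    have hiA : i + 1 < A.card := hlt.trans_le (countGe_le_card A t)
    obtain ⟨x, hx⟩ := exists_ent_eq_some hiA
    obtain ⟨y, hy⟩ := exists_ent_eq_some (show i < B.card by omega)
    have hryx : r y x := by simpa [hx, hy, oRel] using h i
    have htx := (lt_countGe_iff hx t).1 hlt
    exact lt_irrefl i ((lt_countGe_iff hy _).2 (by have := (hr y x).1 hryx; omega))
  · refine fun h i => oRel_of_some fun y x hy hx => (hr y x).2 ?_
    have := ((lt_countGe_iff hx x).2 le_rfl).trans_le (h x)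
    exact (lt_countGe_iff hy _).1 (by omega)

end Enumeration

def IsSpecialCount (X : Symb) : Prop :=
  ∀ t, countGe X.2 t ≤ countGe X.1 t ∧ countGe X.1 t ≤ countGe X.2 t + 1

/-- The counting form of the inequalities of `B̄⁺`: with `(a, b) = (1, 0)` it is `Bm Y V`
and with `(a, b) = (0, 1)` it is `Bm1 Y V` (up to the sizes of the rows). -/
def Linked (a b : ℕ) (Y V : Symb) : Prop :=
  ∀ t, countGe V.2 t ≤ countGe Y.1 (t + a) ∧ countGe Y.1 t ≤ countGe V.2 (t + b) + 1 ∧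
    countGe V.1 t ≤ countGe Y.2 (t + a) + 1 ∧ countGe Y.2 t ≤ countGe V.1 (t + b)

def totalGe (X : Symb) (t : ℕ) : ℕ := countGe X.1 t + countGe X.2 t

lemma isSpecialCount_of_interlacing {Z : Symb} (h1 : Z.2.card ≤ Z.1.card)
    (h2 : Z.1.card ≤ Z.2.card + 1) (ha : ∀ i, oRel (· ≥ ·) (ent Z.1 i) (ent Z.2 i))
    (hb : ∀ i, oRel (· ≥ ·) (ent Z.2 i) (ent Z.1 (i + 1))) : IsSpecialCount Z := fun t =>
  ⟨(forall_oRel_ent_iff (k := 0) (fun _ _ => Iff.rfl) h1).1 ha t,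
    (forall_oRel_ent_succ_iff (k := 0) (fun _ _ => Iff.rfl) h2).1 hb t⟩

lemma IsSpecial1.isSpecialCount {Z : Symb} {m : ℕ} (h : IsSpecial1 Z m) : IsSpecialCount Z :=
  isSpecialCount_of_interlacing (by simp [h.1, h.2.1]) (by simp [h.1, h.2.1]) h.2.2.1 h.2.2.2

lemma IsSpecial0.isSpecialCount {Z : Symb} {m : ℕ} (h : IsSpecial0 Z m) : IsSpecialCount Z :=
  isSpecialCount_of_interlacing (by simp [h.1, h.2.1]) (by simp [h.1, h.2.1]) h.2.2.1 h.2.2.2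

lemma bm_iff {L L' : Symb} :
    Bm L L' ↔ L'.1.card = L.2.card ∧ L'.2.card + 1 = L.1.card ∧ Linked 1 0 L L' := by
  simp only [Bm, Linked, forall_and]
  refine and_congr_right fun h1 => and_congr_right fun h2 => ?_
  exact and_congr (forall_oRel_ent_iff (fun _ _ => Iff.rfl) (by omega))
    (and_congr (forall_oRel_ent_succ_iff (fun _ _ => Iff.rfl) (by omega))
      (and_congr (forall_oRel_ent_succ_iff (fun _ _ => Iff.rfl) (by omega))
        (forall_oRel_ent_iff (fun _ _ => Iff.rfl) (by omega))))

lemma bm1_iff {L L' : Symb} :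
    Bm1 L L' ↔ L'.1.card = L.2.card + 1 ∧ L'.2.card = L.1.card ∧ Linked 0 1 L L' := by
  simp only [Bm1, Linked, forall_and]
  refine and_congr_right fun h1 => and_congr_right fun h2 => ?_
  exact and_congr (forall_oRel_ent_iff (fun _ _ => Iff.rfl) (by omega))
    (and_congr (forall_oRel_ent_succ_iff (fun _ _ => Iff.rfl) (by omega))
      (and_congr (forall_oRel_ent_succ_iff (fun _ _ => Iff.rfl) (by omega))
        (forall_oRel_ent_iff (fun _ _ => Iff.rfl) (by omega))))

lemma self_mem_Sbar (Z : Symb) : Z ∈ Sbar Z :=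
  ⟨(∅, ∅), ⟨Finset.empty_subset _, Finset.empty_subset _⟩, by simp [lam]⟩

lemma dRel_iff {Z Z' A A' : Symb} {m m' a b : ℕ} (hab : a + b = 1) (hm : m' = m + b) :
    DRel Z Z' m m' A A' ↔ A ∈ Sbar Z ∧ A' ∈ Sbar Z' ∧ A.1.card = m + 1 ∧ A.2.card = m ∧
      A'.1.card = m' ∧ A'.2.card = m' ∧ Linked a b A A' := by
  obtain ⟨rfl, rfl⟩ | ⟨rfl, rfl⟩ : a = 1 ∧ b = 0 ∨ a = 0 ∧ b = 1 := by omega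
  all_goals
    subst hm
    simp only [DRel, BbarPlus, bm_iff, bm1_iff]
    grind

section Linked

variable {a b : ℕ} {X Y V M : Symb}

lemma linked_comm : Linked a b Y V ↔ Linked b a V Y :=
  forall_congr' fun _ => by tauto

lemma Linked.totalGe_le (h : Linked a b Y V) (t : ℕ) :
    totalGe V t ≤ totalGe Y (t + a) + 1 ∧ totalGe Y t ≤ totalGe V (t + b) + 1 := by
  unfold totalGe
  have := h t
  omega

lemma linked_of_totalGe_le (hX : IsSpecialCount X) (hY : IsSpecialCount Y)
    (h : ∀ t, totalGe X t ≤ totalGe Y (t + a) + 1 ∧ totalGe Y t ≤ totalGe X (t + b) + 1) :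
    Linked a b Y X := by
  intro t
  unfold totalGe at h
  have := h t; have := hX t; have := hX (t + b); have := hY t; have := hY (t + a)
  omega

lemma countGe_sdiff_union {A B C : Finset ℕ} (hBA : B ⊆ A) (hAC : Disjoint A C) (t : ℕ) :
    countGe (A \ B ∪ C) t + countGe B t = countGe A t + countGe C t := by
  rw [countGe_union (hAC.mono_left Finset.sdiff_subset), ← countGe_sdiff_add hBA t]
  ring

lemma countGe_fst_lam (hM : SubZI M X) (t : ℕ) :
    countGe (lam X M).1 t + countGe M.1 t = countGe X.1 t + countGe M.2 t :=
  countGe_sdiff_union (fun _ hx => (Finset.mem_sdiff.1 (hM.1 hx)).1)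
    (Finset.disjoint_sdiff.mono_right hM.2) t

lemma countGe_snd_lam (hM : SubZI M X) (t : ℕ) :
    countGe (lam X M).2 t + countGe M.2 t = countGe X.2 t + countGe M.1 t :=
  countGe_sdiff_union (fun _ hx => (Finset.mem_sdiff.1 (hM.2 hx)).1)
    (Finset.disjoint_sdiff.mono_right hM.1) t

lemma totalGe_lam (hM : SubZI M X) (t : ℕ) : totalGe (lam X M) t = totalGe X t := by
  unfold totalGe
  have := countGe_fst_lam hM t
  have := countGe_snd_lam hM t
  omega

variable (hab : a + b = 1)
include hab

lemma Linked.countGe_snd_eq (h : Linked a b Y V) {u : ℕ} (hu : u ∈ Y.1) :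
    countGe V.2 (u + b) = countGe Y.1 (u + 1) := by
  have h1 := (h (u + b)).1
  have h2 := (h u).2.1
  rw [show u + b + a = u + 1 by omega] at h1
  have := countGe_eq_countGe_succ_add Y.1 u
  simp only [hu, if_true] at this
  omega

lemma Linked.countGe_fst_eq (h : Linked a b Y V) {u : ℕ} (hu : u ∈ Y.2) :
    countGe V.1 (u + b) = countGe Y.2 u := by
  have h1 := (h (u + b)).2.2.1
  have h2 := (h u).2.2.2
  rw [show u + b + a = u + 1 by omega] at h1
  have := countGe_eq_countGe_succ_add Y.2 u
  simp only [hu, if_true] at this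
  omega

end Linked

def cutPoints (b : ℕ) (Y : Symb) : Finset ℕ := insert 0 ((Y.1 ∪ Y.2).image (· + b))

section CutPoints

variable {a b : ℕ} {X Y V M : Symb}

lemma zero_mem_cutPoints : 0 ∈ cutPoints b Y := Finset.mem_insert_self _ _

lemma add_mem_cutPoints {y : ℕ} (hy : y ∈ Y.1 ∪ Y.2) : y + b ∈ cutPoints b Y :=
  Finset.mem_insert_of_mem (Finset.mem_image_of_mem _ hy)

lemma exists_cutPoint_le (hab : a + b = 1) (t : ℕ) :
    ∃ p ∈ cutPoints b Y, p ≤ t ∧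
      countGe Y.1 (p + a) ≤ countGe Y.1 (t + a) ∧ countGe Y.2 (p + a) ≤ countGe Y.2 (t + a) := by
  obtain ⟨p, hp, hmax⟩ := Finset.exists_max_image ((cutPoints b Y).filter (· ≤ t)) id
    ⟨0, Finset.mem_filter.2 ⟨zero_mem_cutPoints, Nat.zero_le t⟩⟩
  rw [Finset.mem_filter] at hp
  have hY : ∀ y ∈ Y.1 ∪ Y.2, p + a ≤ y → t + a ≤ y := fun y hy hpy => by
    by_contra! hyt
    have := hmax (y + b) (Finset.mem_filter.2 ⟨add_mem_cutPoints hy, by omega⟩)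
    simp only [id] at this
    omega
  exact ⟨p, hp.1, hp.2, countGe_le_countGe fun y hy => hY y (Finset.mem_union_left _ hy),
    countGe_le_countGe fun y hy => hY y (Finset.mem_union_right _ hy)⟩

lemma exists_cutPoint_ge {t y : ℕ} (hy : y ∈ Y.1 ∪ Y.2) (hty : t ≤ y) :
    ∃ q ∈ cutPoints b Y, t + b ≤ q ∧
      countGe Y.1 t ≤ countGe Y.1 (q - b) ∧ countGe Y.2 t ≤ countGe Y.2 (q - b) := by
  obtain ⟨q, hq, hmin⟩ := Finset.exists_min_image ((cutPoints b Y).filter (t + b ≤ ·)) id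
    ⟨y + b, Finset.mem_filter.2 ⟨add_mem_cutPoints hy, by omega⟩⟩
  rw [Finset.mem_filter] at hq
  have hY : ∀ y ∈ Y.1 ∪ Y.2, t ≤ y → q - b ≤ y := fun y hy hty => by
    have := hmin (y + b) (Finset.mem_filter.2 ⟨add_mem_cutPoints hy, by omega⟩)
    simp only [id] at this
    omega
  exact ⟨q, hq.1, hq.2, countGe_le_countGe fun y hy => hY y (Finset.mem_union_left _ hy),
    countGe_le_countGe fun y hy => hY y (Finset.mem_union_right _ hy)⟩

/-- The counts of `Y` occurring in `Linked` are constant between consecutive cut points, so `V`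
only has to agree with `X` at the cut points. -/
lemma Linked.of_countGe_eq (hab : a + b = 1) (hXY : Linked a b Y X)
    (hV : ∀ p ∈ cutPoints b Y, countGe V.1 p = countGe X.1 p ∧ countGe V.2 p = countGe X.2 p) :
    Linked a b Y V := by
  intro t
  obtain ⟨p, hp, hpt, hp1, hp2⟩ := exists_cutPoint_le (Y := Y) hab t
  have above : ∀ s ⊆ Y.1 ∪ Y.2, 0 < countGe s t → ∃ q ∈ cutPoints b Y, t + b ≤ q ∧
      countGe Y.1 t ≤ countGe Y.1 (q - b) ∧ countGe Y.2 t ≤ countGe Y.2 (q - b) := by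
    intro s hs hpos
    obtain ⟨y, hy, hty⟩ := Finset.filter_nonempty_iff.1 (Finset.card_pos.1 hpos)
    exact exists_cutPoint_ge (hs hy) hty
  refine ⟨?_, ?_, ?_, ?_⟩
  · calc countGe V.2 t ≤ countGe V.2 p := countGe_antitone _ hpt
      _ = countGe X.2 p := (hV p hp).2
      _ ≤ countGe Y.1 (p + a) := (hXY p).1
      _ ≤ countGe Y.1 (t + a) := hp1
  · rcases Nat.eq_zero_or_pos (countGe Y.1 t) with h0 | hpos
    · omega
    obtain ⟨q, hq, htq, hq1, -⟩ := above _ Finset.subset_union_left hpos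
    calc countGe Y.1 t ≤ countGe Y.1 (q - b) := hq1
      _ ≤ countGe X.2 (q - b + b) + 1 := (hXY _).2.1
      _ = countGe V.2 q + 1 := by rw [Nat.sub_add_cancel (by omega), (hV q hq).2]
      _ ≤ countGe V.2 (t + b) + 1 := by grw [countGe_antitone _ htq]
  · calc countGe V.1 t ≤ countGe V.1 p := countGe_antitone _ hpt
      _ = countGe X.1 p := (hV p hp).1
      _ ≤ countGe Y.2 (p + a) + 1 := (hXY p).2.2.1
      _ ≤ countGe Y.2 (t + a) + 1 := by grw [hp2]
  · rcases Nat.eq_zero_or_pos (countGe Y.2 t) with h0 | hpos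
    · omega
    obtain ⟨q, hq, htq, -, hq2⟩ := above _ Finset.subset_union_right hpos
    calc countGe Y.2 t ≤ countGe Y.2 (q - b) := hq2
      _ ≤ countGe X.1 (q - b + b) := (hXY _).2.2.2
      _ = countGe V.1 q := by rw [Nat.sub_add_cancel (by omega), (hV q hq).1]
      _ ≤ countGe V.1 (t + b) := countGe_antitone _ htq

lemma linked_lam_iff (hab : a + b = 1) (hXY : Linked a b Y X) (hM : SubZI M X) :
    ((lam X M).1.card = X.1.card ∧ (lam X M).2.card = X.2.card ∧ Linked a b Y (lam X M)) ↔
      ∀ p ∈ cutPoints b Y, countGe M.1 p = countGe M.2 p := by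
  have h1 := countGe_fst_lam hM
  have h2 := countGe_snd_lam hM
  constructor
  · rintro ⟨hc1, -, hV⟩ p hp
    rcases Finset.mem_insert.1 hp with rfl | hp
    · have := h1 0
      simp only [countGe_zero] at this ⊢
      omega
    obtain ⟨u, hu, rfl⟩ := Finset.mem_image.1 hp
    rcases Finset.mem_union.1 hu with hu | hu
    · have := (hV.countGe_snd_eq hab hu).trans (hXY.countGe_snd_eq hab hu).symm
      have := h2 (u + b)
      omega
    · have := (hV.countGe_fst_eq hab hu).trans (hXY.countGe_fst_eq hab hu).symm
      have := h1 (u + b)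
      omega
  · intro hbal
    have hV : ∀ p ∈ cutPoints b Y, countGe (lam X M).1 p = countGe X.1 p ∧
        countGe (lam X M).2 p = countGe X.2 p := fun p hp => by
      have := hbal p hp
      have := h1 p
      have := h2 p
      omega
    obtain ⟨hc1, hc2⟩ := hV 0 zero_mem_cutPoints
    simp only [countGe_zero] at hc1 hc2
    exact ⟨hc1, hc2, hXY.of_countGe_eq hab hV⟩

end CutPoints

def cell (E : Finset ℕ) (x : ℕ) : Finset ℕ := E.filter (· ≤ x)

def cellPairs (E C D : Finset ℕ) : Finset (ℕ × ℕ) :=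
  (C ×ˢ D).filter fun q => cell E q.1 = cell E q.2

section Cells

variable {E C D M₁ M₂ : Finset ℕ} {p x : ℕ}

lemma mem_cell : p ∈ cell E x ↔ p ∈ E ∧ p ≤ x := Finset.mem_filter

lemma cell_mono (E : Finset ℕ) : Monotone (cell E) :=
  fun _ _ h => Finset.monotone_filter_right E fun _ _ hp => hp.trans h

lemma cell_eq_of_mem_Icc {c d : ℕ} (h : cell E c = cell E d) (h1 : min c d ≤ x)
    (h2 : x ≤ max c d) : cell E x = cell E c := by
  have hmin : cell E (min c d) = cell E c := by
    rcases min_choice c d with h' | h' <;> simp [h', h]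
  have hmax : cell E (max c d) = cell E c := by
    rcases max_choice c d with h' | h' <;> simp [h', h]
  exact le_antisymm (hmax ▸ cell_mono E h2) (hmin ▸ cell_mono E h1)

lemma mem_cellPairs {q : ℕ × ℕ} :
    q ∈ cellPairs E C D ↔ q.1 ∈ C ∧ q.2 ∈ D ∧ cell E q.1 = cell E q.2 := by
  simp [cellPairs, and_assoc]

lemma injOn_fst_cellPairs (hD : Set.InjOn (cell E) D) :
    Set.InjOn Prod.fst (cellPairs E C D : Set (ℕ × ℕ)) := fun q hq q' hq' h => by
  rw [Finset.mem_coe, mem_cellPairs] at hq hq'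
  exact Prod.ext h (hD hq.2.1 hq'.2.1 (by rw [← hq.2.2, ← hq'.2.2, h]))

lemma injOn_snd_cellPairs (hC : Set.InjOn (cell E) C) :
    Set.InjOn Prod.snd (cellPairs E C D : Set (ℕ × ℕ)) := fun q hq q' hq' h => by
  rw [Finset.mem_coe, mem_cellPairs] at hq hq'
  exact Prod.ext (hC hq.1 hq'.1 (by rw [hq.2.2, hq'.2.2, h])) h

lemma countGe_image {Q : Finset (ℕ × ℕ)} {f : ℕ × ℕ → ℕ} (hf : Set.InjOn f Q) (t : ℕ) :
    countGe (Q.image f) t = (Q.filter fun q => t ≤ f q).card := by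
  rw [countGe, Finset.filter_image,
    Finset.card_image_of_injOn (hf.mono (Finset.coe_subset.2 (Finset.filter_subset _ _)))]

lemma countGe_fst_eq_snd_of_subset_cellPairs {Q : Finset (ℕ × ℕ)}
    (hC : Set.InjOn (cell E) C) (hD : Set.InjOn (cell E) D) (hQ : Q ⊆ cellPairs E C D) :
    ∀ p ∈ E, countGe (Q.image Prod.fst) p = countGe (Q.image Prod.snd) p := by
  intro p hp
  rw [countGe_image ((injOn_fst_cellPairs hD).mono (Finset.coe_subset.2 hQ)),
    countGe_image ((injOn_snd_cellPairs hC).mono (Finset.coe_subset.2 hQ))]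
  congr 1
  refine Finset.filter_congr fun q hq => ?_
  have hle : ∀ x, p ≤ x ↔ p ∈ cell E x := fun x => by simp [mem_cell, hp]
  rw [hle, hle, (mem_cellPairs.1 (hQ hq)).2.2]

/-- The cell of `c` is the interval `[p, q)` between consecutive cut points (with `q` beyond
`M₁ ∪ M₂` if there is no cut point above `c`), and balance at `p` and `q` gives `M₂` as many
elements in it as `M₁`. -/
lemma exists_cell_eq_of_countGe_eq (h0 : 0 ∈ E) (hbal : ∀ p ∈ E, countGe M₁ p = countGe M₂ p)
    {c : ℕ} (hc : c ∈ M₁) : ∃ d ∈ M₂, cell E d = cell E c := by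
  obtain ⟨p, hp, hpmax⟩ := Finset.exists_max_image (cell E c) id ⟨0, mem_cell.2 ⟨h0, c.zero_le⟩⟩
  rw [mem_cell] at hp
  obtain ⟨q, hcq, hq, hqmin⟩ : ∃ q, c < q ∧ countGe M₁ q = countGe M₂ q ∧
      ∀ r ∈ E, c < r → q ≤ r := by
    rcases (E.filter (c < ·)).eq_empty_or_nonempty with he | hne
    · set q := c + 1 + (M₁ ∪ M₂).sup id
      have hzero : ∀ s ⊆ M₁ ∪ M₂, countGe s q = 0 := fun s hs =>
        Finset.card_eq_zero.2 (Finset.filter_eq_empty_iff.2 fun y hy => by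
          have := Finset.le_sup (f := id) (hs hy)
          simp only [id] at this
          omega)
      refine ⟨q, by omega, by rw [hzero _ Finset.subset_union_left,
        hzero _ Finset.subset_union_right], fun r hr hcr => ?_⟩
      simp [Finset.filter_eq_empty_iff.1 he hr] at hcr
    · obtain ⟨q, hq, hqmin⟩ := Finset.exists_min_image _ id hne
      rw [Finset.mem_filter] at hq
      exact ⟨q, hq.2, hbal q hq.1, fun r hr hcr => hqmin r (Finset.mem_filter.2 ⟨hr, hcr⟩)⟩
  have hband₁ := card_filter_Ico_add_countGe (s := M₁) (show p ≤ q by omega)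
  have hband₂ := card_filter_Ico_add_countGe (s := M₂) (show p ≤ q by omega)
  have hc' : 0 < (M₁.filter fun y => p ≤ y ∧ y < q).card :=
    Finset.card_pos.2 ⟨c, Finset.mem_filter.2 ⟨hc, hp.2, hcq⟩⟩
  have hpos : 0 < (M₂.filter fun y => p ≤ y ∧ y < q).card := by
    have := hbal p hp.1
    omega
  obtain ⟨d, hd, hpd, hdq⟩ := Finset.filter_nonempty_iff.1 (Finset.card_pos.1 hpos)
  refine ⟨d, hd, Finset.ext fun r => ?_⟩
  rw [mem_cell, mem_cell, and_congr_right_iff]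
  intro hr
  constructor
  · intro hrd
    by_contra! hrc
    have := hqmin r hr hrc
    omega
  · intro hrc
    have := hpmax r (mem_cell.2 ⟨hr, hrc⟩)
    simp only [id] at this
    omega

lemma exists_subset_cellPairs_of_countGe_eq (h0 : 0 ∈ E) (hD : Set.InjOn (cell E) D)
    (h₁ : M₁ ⊆ C) (h₂ : M₂ ⊆ D) (hbal : ∀ p ∈ E, countGe M₁ p = countGe M₂ p) :
    ∃ Q ⊆ cellPairs E C D, M₁ = Q.image Prod.fst ∧ M₂ = Q.image Prod.snd := by
  have match₁ := fun c (hc : c ∈ M₁) => exists_cell_eq_of_countGe_eq h0 hbal hc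
  have match₂ := fun d (hd : d ∈ M₂) =>
    exists_cell_eq_of_countGe_eq h0 (fun p hp => (hbal p hp).symm) hd
  refine ⟨(cellPairs E C D).filter (·.1 ∈ M₁), Finset.filter_subset _ _, ?_, ?_⟩
  · ext c
    simp only [Finset.mem_image, Finset.mem_filter, mem_cellPairs]
    constructor
    · intro hc
      obtain ⟨d, hd, hdc⟩ := match₁ c hc
      exact ⟨(c, d), ⟨⟨h₁ hc, h₂ hd, hdc.symm⟩, hc⟩, rfl⟩
    · rintro ⟨q, ⟨-, hq⟩, rfl⟩
      exact hq
  · ext d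
    simp only [Finset.mem_image, Finset.mem_filter, mem_cellPairs]
    constructor
    · intro hd
      obtain ⟨c, hc, hcd⟩ := match₂ d hd
      exact ⟨(c, d), ⟨⟨h₁ hc, h₂ hd, hcd⟩, hc⟩, rfl⟩
    · rintro ⟨q, ⟨⟨-, hq₂, hq⟩, hq₁⟩, rfl⟩
      obtain ⟨d', hd', hd'c⟩ := match₁ q.1 hq₁
      rwa [hD hq₂ (h₂ hd') (hq.symm.trans hd'c.symm)]

lemma consecPair_of_mem_cellPairs {X : Symb} {q : ℕ × ℕ}
    (hC : Set.InjOn (cell E) ↑(X.1 \ X.2)) (hD : Set.InjOn (cell E) ↑(X.2 \ X.1))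
    (hq : q ∈ cellPairs E (X.1 \ X.2) (X.2 \ X.1)) : ConsecPair X q.1 q.2 := by
  obtain ⟨hc, hd, hcell⟩ := mem_cellPairs.1 hq
  refine ⟨hc, hd, fun x hx ⟨hlo, hhi⟩ => ?_⟩
  have hxc := cell_eq_of_mem_Icc hcell hlo.le hhi.le
  rcases Finset.mem_union.1 hx with hx | hx
  · have := hC hx hc hxc
    omega
  · have := hD hx hd (hxc.trans hcell)
    omega

end Cells

section Separation

variable {a b : ℕ} {X Y : Symb} {R : Finset ℕ}

lemma IsSpecialCount.totalGe_succ_add_three_le (hX : IsSpecialCount X)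
    (hR : R = X.1 \ X.2 ∨ R = X.2 \ X.1) {x x' : ℕ} (hx : x ∈ R) (hx' : x' ∈ R) (hlt : x' < x) :
    totalGe X (x + 1) + 3 ≤ totalGe X x' := by
  unfold totalGe
  have e₁ := countGe_eq_countGe_succ_add X.1 x
  have e₂ := countGe_eq_countGe_succ_add X.2 x
  have e₁' := countGe_eq_countGe_succ_add X.1 x'
  have e₂' := countGe_eq_countGe_succ_add X.2 x'
  have m₁ := countGe_antitone X.1 (show x' + 1 ≤ x by omega)
  have m₂ := countGe_antitone X.2 (show x' + 1 ≤ x by omega)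
  have := hX x
  have := hX (x + 1)
  have := hX x'
  rcases hR with rfl | rfl <;> rw [Finset.mem_sdiff] at hx hx' <;>
    simp only [hx.1, hx.2, hx'.1, hx'.2, if_true, if_false] at e₁ e₂ e₁' e₂' <;> omega

/-- The total count of `X` drops by at least two between two entries of the same row of `X_I`,
while `Linked` lets it drop by at most one between consecutive cut points. -/
lemma exists_cutPoint_between (hab : a + b = 1) (hX : IsSpecialCount X)
    (hXY : Linked a b Y X) (hR : R = X.1 \ X.2 ∨ R = X.2 \ X.1) {x x' : ℕ} (hx : x ∈ R)
    (hx' : x' ∈ R) (hlt : x' < x) : ∃ p ∈ cutPoints b Y, x' < p ∧ p ≤ x := by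
  have h₁ := (hXY.totalGe_le x').1
  have h₂ := (hXY.totalGe_le (x + a)).2
  rw [show x + a + b = x + 1 by omega] at h₂
  have h₃ := hX.totalGe_succ_add_three_le hR hx hx' hlt
  unfold totalGe at h₁ h₂ h₃
  obtain ⟨y, hy, hy₁, hy₂⟩ : ∃ y ∈ Y.1 ∪ Y.2, x' + a ≤ y ∧ y < x + a := by
    rcases lt_or_ge (countGe Y.1 (x + a)) (countGe Y.1 (x' + a)) with h | h
    · obtain ⟨y, hy, h⟩ := exists_mem_of_countGe_lt h
      exact ⟨y, Finset.mem_union_left _ hy, h⟩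
    · obtain ⟨y, hy, h⟩ :=
        exists_mem_of_countGe_lt (s := Y.2) (t := x' + a) (t' := x + a) (by omega)
      exact ⟨y, Finset.mem_union_right _ hy, h⟩
  exact ⟨y + b, add_mem_cutPoints hy, by omega, by omega⟩

lemma injOn_cell_cutPoints (hab : a + b = 1) (hX : IsSpecialCount X) (hXY : Linked a b Y X)
    (hR : R = X.1 \ X.2 ∨ R = X.2 \ X.1) : Set.InjOn (cell (cutPoints b Y)) R := by
  intro x hx x' hx' h
  by_contra hne
  wlog hlt : x' < x generalizing x x'
  · exact this hx' hx h.symm (Ne.symm hne) (by omega)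
  obtain ⟨p, hp, hxp, hpx⟩ := exists_cutPoint_between hab hX hXY hR hx hx' hlt
  have hpx' := (mem_cell.1 (h ▸ mem_cell.2 ⟨hp, hpx⟩)).2
  omega

end Separation

theorem exists_cellPairs_of_linked {a b : ℕ} {X Y M N : Symb} (hab : a + b = 1)
    (hX : IsSpecialCount X) (hY : IsSpecialCount Y) (hM : SubZI M X) (hN : SubZI N Y)
    (hlink : Linked a b (lam Y N) (lam X M)) :
    ∃ P : Finset (ℕ × ℕ), (∀ p ∈ P, ConsecPair X p.1 p.2) ∧
      (∀ p ∈ P, ∀ q ∈ P, p ≠ q → p.1 ≠ q.1 ∧ p.2 ≠ q.2) ∧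
      ∀ V : Symb, (V ∈ Sbar X ∧ V.1.card = X.1.card ∧ V.2.card = X.2.card ∧ Linked a b Y V ↔
        ∃ Q ⊆ P, V = lam X (Q.image Prod.fst, Q.image Prod.snd)) := by
  have hXY : Linked a b Y X := linked_of_totalGe_le hX hY fun t => by
    simpa only [totalGe_lam hM, totalGe_lam hN] using hlink.totalGe_le t
  have hC := injOn_cell_cutPoints hab hX hXY (Or.inl rfl)
  have hD := injOn_cell_cutPoints hab hX hXY (Or.inr rfl)
  refine ⟨cellPairs (cutPoints b Y) (X.1 \ X.2) (X.2 \ X.1),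
    fun q hq => consecPair_of_mem_cellPairs hC hD hq,
    fun p hp q hq hpq => ⟨fun h => hpq (injOn_fst_cellPairs hD hp hq h),
      fun h => hpq (injOn_snd_cellPairs hC hp hq h)⟩, fun V => ⟨?_, ?_⟩⟩
  · rintro ⟨⟨M, hM, rfl⟩, hV⟩
    obtain ⟨Q, hQ, h₁, h₂⟩ := exists_subset_cellPairs_of_countGe_eq zero_mem_cutPoints hD
      hM.1 hM.2 ((linked_lam_iff hab hXY hM).1 hV)
    exact ⟨Q, hQ, by rw [← h₁, ← h₂]⟩
  · rintro ⟨Q, hQ, rfl⟩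
    have hsub : SubZI (Q.image Prod.fst, Q.image Prod.snd) X :=
      ⟨Finset.image_subset_iff.2 fun q hq => (mem_cellPairs.1 (hQ hq)).1,
        Finset.image_subset_iff.2 fun q hq => (mem_cellPairs.1 (hQ hq)).2.1⟩
    exact ⟨⟨_, hsub, rfl⟩, (linked_lam_iff hab hXY hsub).2
      (countGe_fst_eq_snd_of_subset_cellPairs hC hD hQ)⟩

theorem stmt3 (m m' : ℕ) (Z Z' : Symb) (hm : m' = m ∨ m' = m + 1)
    (hZ : IsSpecial1 Z m) (hZ' : IsSpecial0 Z' m')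
    (hD : ∃ A A' : Symb, DRel Z Z' m m' A A') :
    (∃ P : Finset (ℕ × ℕ),
      (∀ p ∈ P, ConsecPair Z' p.1 p.2) ∧
      (∀ p ∈ P, ∀ q ∈ P, p ≠ q → p.1 ≠ q.1 ∧ p.2 ≠ q.2) ∧
      {Λ' | DRel Z Z' m m' Z Λ'} =
        {Λ' : Symb | ∃ Q ⊆ P, Λ' = lam Z' (Q.image Prod.fst, Q.image Prod.snd)}) ∧
    (∃ P : Finset (ℕ × ℕ),
      (∀ p ∈ P, ConsecPair Z p.1 p.2) ∧
      (∀ p ∈ P, ∀ q ∈ P, p ≠ q → p.1 ≠ q.1 ∧ p.2 ≠ q.2) ∧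
      {Λ | DRel Z Z' m m' Λ Z'} =
        {Λ : Symb | ∃ Q ⊆ P, Λ = lam Z (Q.image Prod.fst, Q.image Prod.snd)}) := by
  obtain ⟨a, b, hab, hmb⟩ : ∃ a b, a + b = 1 ∧ m' = m + b := by
    rcases hm with h | h
    exacts [⟨1, 0, rfl, h⟩, ⟨0, 1, rfl, h⟩]
  obtain ⟨A, A', hAA'⟩ := hD
  obtain ⟨⟨M, hM, rfl⟩, ⟨N, hN, rfl⟩, -, -, -, -, hlink⟩ := (dRel_iff hab hmb).1 hAA'
  obtain ⟨P, hPc, hPd, hP⟩ :=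
    exists_cellPairs_of_linked hab hZ'.isSpecialCount hZ.isSpecialCount hN hM hlink
  obtain ⟨P', hPc', hPd', hP'⟩ := exists_cellPairs_of_linked (b.add_comm a ▸ hab)
    hZ.isSpecialCount hZ'.isSpecialCount hM hN (linked_comm.1 hlink)
  refine ⟨⟨P, hPc, hPd, Set.ext fun V => ?_⟩, ⟨P', hPc', hPd', Set.ext fun V => ?_⟩⟩
  · simp only [Set.mem_ofPred_eq, ← hP, dRel_iff hab hmb, self_mem_Sbar, hZ.1, hZ.2.1, hZ'.1,
      hZ'.2.1, true_and]
  · simp only [Set.mem_ofPred_eq, ← hP', dRel_iff hab hmb, self_mem_Sbar, hZ.1, hZ.2.1, hZ'.1,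
      hZ'.2.1, true_and]
    rw [linked_comm]
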